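/- Fix ε > 0 and a,b ∈ (0,1) with (1−b) < ((1−a)/a)·b·(b−a)·c for some c ∈ (0,1). Let T ⊆ 2^{<ω} be a tree, w_t = μ([T]∩N_t)/μ(N_t), and call v ⊒ t (t,a)-good if w_u ≥ a for all t ⊑ u ⊑ v. If w_t = b and b > f(a), where f is any function with the property that b > f(a) implies (1−b)/(b(b−a)) < (1−a)/a, then the fraction s_{t,a,i} of (t,a)-good nodes on level |t|+i of T_t satisfies liminf_{i→∞} s_{t,a,i} ≥ a. -/

import Mathlib

open MeasureTheory Filter Set
open scoped ENNReal Topology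

noncomputable section

/-- The restriction `x↾n` of `x : ℕ → α` to its first `n` values, as a list. -/
def res {α : Type*} (x : ℕ → α) (n : ℕ) : List α := List.ofFn (fun i : Fin n => x i)

/-- The basic clopen cylinder `N_s` of all extensions of the finite string `s`. -/
def Cyl {α : Type*} (s : List α) : Set (ℕ → α) := {x | res x s.length = s}

/-- A (set-theoretic) tree: a collection of finite sequences closed under initial
segments. -/
def IsTree {α : Type*} (T : Set (List α)) : Prop :=
  ∀ s ∈ T, ∀ t : List α, t <+: s → t ∈ T

/-- The set `[T]` of branches of a tree `T`. -/
def branches {α : Type*} (T : Set (List α)) : Set (ℕ → α) :=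
  {x | ∀ n : ℕ, res x n ∈ T}

/-- The level `Lev_{|t|+i}(T_t)` of the restricted tree `T_t` at height `|t| + i`. -/
def lev (T : Set (List Bool)) (t : List Bool) (i : ℕ) : Set (List Bool) :=
  {u | u ∈ T ∧ t <+: u ∧ u.length = t.length + i}

/-- The weight `w_t = μ([T] ∩ N_t) / μ(N_t)` of the node `t` in the tree `T`. -/
def wt (μ : Measure (ℕ → Bool)) (T : Set (List Bool)) (t : List Bool) : ℝ≥0∞ :=
  μ (branches T ∩ Cyl t) / μ (Cyl t)

/-- `v` is a `(t,a)`-good node of `T`: `w_u ≥ a` for all `u` with `t ⊑ u ⊑ v`. -/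
def goodNode (μ : Measure (ℕ → Bool)) (T : Set (List Bool)) (t : List Bool) (a : ℝ)
    (v : List Bool) : Prop :=
  ∀ u : List Bool, t <+: u → u <+: v → ENNReal.ofReal a ≤ wt μ T u

lemma res_length {α : Type*} (x : ℕ → α) (n : ℕ) : (res x n).length = n := by
  simp [res]

lemma res_eq_take {α : Type*} (x : ℕ → α) {m n : ℕ} (h : m ≤ n) :
    res x m = (res x n).take m := by
  apply List.ext_get
  · simp [res, h]
  · intro i h1 h2
    simp only [res, List.get_eq_getElem, List.getElem_take, List.getElem_ofFn]

lemma res_prefix {α : Type*} (x : ℕ → α) {m n : ℕ} (h : m ≤ n) :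
    res x m <+: res x n := by
  rw [res_eq_take x h]; exact List.take_prefix _ _

lemma mem_Cyl {α : Type*} {x : ℕ → α} {s : List α} :
    x ∈ Cyl s ↔ res x s.length = s := Iff.rfl

lemma res_eq_of_mem_Cyl {α : Type*} {x : ℕ → α} {s s' : List α} (hx : x ∈ Cyl s)
    (hp : s' <+: s) : res x s'.length = s' := by
  have h1 : res x s'.length <+: res x s.length := res_prefix x hp.length_le
  rw [hx] at h1
  rcases List.prefix_or_prefix_of_prefix h1 hp with h | h
  · exact h.eq_of_length (by rw [res_length])
  · exact (h.eq_of_length (by rw [res_length])).symm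

lemma Cyl_mono {α : Type*} {s s' : List α} (h : s <+: s') : Cyl s' ⊆ Cyl s :=
  fun _ hx => res_eq_of_mem_Cyl hx h

lemma Cyl_disjoint {α : Type*} {s s' : List α} (h : ¬ s <+: s') (h' : ¬ s' <+: s) :
    Disjoint (Cyl s) (Cyl s') := by
  rw [Set.disjoint_left]
  intro x hx hx'
  rcases le_total s.length s'.length with hl | hl
  · exact h (by rw [← hx, ← hx']; exact (res_prefix x hl))
  · exact h' (by rw [← hx, ← hx']; exact (res_prefix x hl))

lemma measurable_Cyl {s : List Bool} : MeasurableSet (Cyl s) := by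
  have hs : Cyl s = ⋂ i : Fin s.length, {x : ℕ → Bool | x i = s.get i} := by
    ext x
    simp only [mem_Cyl, Set.mem_iInter, Set.mem_setOf_eq, res]
    constructor
    · intro h i
      have h2 := List.get_of_eq h ⟨i, by simp⟩
      simpa using h2
    · intro h
      apply List.ext_get (by simp)
      intro i h1 h2
      simp only [List.get_ofFn]
      exact h ⟨i, h2⟩
  rw [hs]
  exact MeasurableSet.iInter fun i => measurable_pi_apply (i : ℕ) (measurableSet_singleton _)

lemma measure_cylUnion (μ : Measure (ℕ → Bool))
    (hμ : ∀ s : List Bool, μ (Cyl s) = (1 / 2 : ℝ≥0∞) ^ s.length)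
    (S : Set (List Bool)) (n : ℕ) (hS : ∀ u ∈ S, u.length = n) :
    μ (⋃ u ∈ S, Cyl u) = (S.ncard : ℝ≥0∞) * (1 / 2 : ℝ≥0∞) ^ n := by
  have hfin : S.Finite := (List.finite_length_eq Bool n).subset (fun u hu => hS u hu)
  have hU : (⋃ u ∈ S, Cyl u) = ⋃ u ∈ hfin.toFinset, Cyl u := by
    simp [Set.Finite.mem_toFinset]
  rw [hU, measure_biUnion_finset ?_ (fun _ _ => measurable_Cyl)]
  · rw [Finset.sum_congr rfl (fun u hu => by
      rw [hμ u, hS u (hfin.mem_toFinset.mp hu)])]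
    rw [Finset.sum_const, Set.ncard_eq_toFinset_card S hfin, nsmul_eq_mul]
  · intro u hu u' hu' hne
    simp only [Set.Finite.coe_toFinset] at hu hu'
    apply Cyl_disjoint
    · intro hp; exact hne (hp.eq_of_length (by rw [hS u hu, hS u' hu']))
    · intro hp; exact hne ((hp.eq_of_length (by rw [hS u hu, hS u' hu'])).symm)

def levU (T : Set (List Bool)) (t : List Bool) (i : ℕ) : Set (ℕ → Bool) :=
  ⋃ u ∈ lev T t i, Cyl u

lemma measurable_levU (T : Set (List Bool)) (t : List Bool) (i : ℕ) :
    MeasurableSet (levU T t i) :=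
  MeasurableSet.biUnion (Set.to_countable _) fun _ _ => measurable_Cyl

lemma lev_length {T t i} {u : List Bool} (h : u ∈ lev T t i) : u.length = t.length + i := h.2.2

lemma levU_antitone (T : Set (List Bool)) (hT : IsTree T) (t : List Bool) :
    Antitone (levU T t) := by
  intro i j hij x hx
  simp only [levU, Set.mem_iUnion] at hx ⊢
  obtain ⟨u, hu, hxu⟩ := hx
  refine ⟨u.take (t.length + i), ⟨?_, ?_, ?_⟩, ?_⟩
  · exact hT u hu.1 _ (List.take_prefix _ _)
  · rw [List.prefix_take_iff]
    exact ⟨hu.2.1, by simp⟩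
  · rw [List.length_take, hu.2.2]
    omega
  · exact Cyl_mono (List.take_prefix _ _) hxu

lemma iInter_levU (T : Set (List Bool)) (hT : IsTree T) (t : List Bool) :
    ⋂ i, levU T t i = branches T ∩ Cyl t := by
  ext x
  simp only [Set.mem_iInter, levU, Set.mem_iUnion, Set.mem_inter_iff]
  constructor
  · intro h
    obtain ⟨u0, hu0, hxu0⟩ := h 0
    have hu0t : u0 = t := (hu0.2.1.eq_of_length (by have h2 := hu0.2.2; omega)).symm
    subst hu0t
    refine ⟨fun n => ?_, hxu0⟩
    rcases le_or_gt u0.length n with hn | hn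
    · obtain ⟨u, hu, hxu⟩ := h (n - u0.length)
      have : res x n = u := by
        have := hxu
        rw [mem_Cyl, lev_length hu] at this
        rw [← this]
        congr 1
        omega
      rw [this]; exact hu.1
    · apply hT u0 hu0.1
      rw [← hxu0]
      exact res_prefix x hn.le
  · rintro ⟨hxb, hxt⟩ i
    refine ⟨res x (t.length + i), ⟨hxb _, ?_, ?_⟩, ?_⟩
    · conv_lhs => rw [← hxt]
      exact res_prefix x (by omega)
    · rw [res_length]
    · rw [mem_Cyl, res_length]

lemma measure_levU (μ : Measure (ℕ → Bool))
    (hμ : ∀ s : List Bool, μ (Cyl s) = (1 / 2 : ℝ≥0∞) ^ s.length)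
    (T : Set (List Bool)) (t : List Bool) (i : ℕ) :
    μ (levU T t i) = ((lev T t i).ncard : ℝ≥0∞) * (1 / 2 : ℝ≥0∞) ^ (t.length + i) :=
  measure_cylUnion μ hμ _ _ (fun _ hu => lev_length hu)

def MinBad (μ : Measure (ℕ → Bool)) (T : Set (List Bool)) (t : List Bool) (a : ℝ) :
    Set (List Bool) :=
  {u | t <+: u ∧ wt μ T u < ENNReal.ofReal a ∧
       ∀ u', t <+: u' → u' <+: u → u' ≠ u → ENNReal.ofReal a ≤ wt μ T u'}

lemma minBad_disjoint {μ T t a} {u u' : List Bool} (hu : u ∈ MinBad μ T t a)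
    (hu' : u' ∈ MinBad μ T t a) (hne : u ≠ u') : Disjoint (Cyl u) (Cyl u') := by
  apply Cyl_disjoint
  · intro hp
    exact absurd (hu'.2.2 u hu.1 hp hne) (not_le.mpr hu.2.1)
  · intro hp
    exact absurd (hu.2.2 u' hu'.1 hp hne.symm) (not_le.mpr hu'.2.1)

lemma exists_minBad {μ : Measure (ℕ → Bool)} {T t a} {v : List Bool} (htv : t <+: v)
    (hbad : ¬ goodNode μ T t a v) : ∃ u ∈ MinBad μ T t a, u <+: v := by
  simp only [goodNode] at hbad
  push_neg at hbad
  obtain ⟨u0, hu0t, hu0v, hu0w⟩ := hbad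
  have hex : ∃ m : ℕ, ∃ u : List Bool, u.length = m ∧ t <+: u ∧ u <+: v ∧
      wt μ T u < ENNReal.ofReal a := ⟨u0.length, u0, rfl, hu0t, hu0v, hu0w⟩
  classical
  obtain ⟨u, hlen, hut, huv, huw⟩ := Nat.find_spec hex
  refine ⟨u, ⟨hut, huw, ?_⟩, huv⟩
  intro u' htu' hu'u hne
  by_contra hlt
  have h1 : u'.length < u.length := by
    rcases lt_or_eq_of_le hu'u.length_le with h | h
    · exact h
    · exact absurd (hu'u.eq_of_length h) hne
  have := Nat.find_min hex (m := u'.length) (by omega)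
  exact this ⟨u', rfl, htu', hu'u.trans huv, not_le.mp hlt⟩

lemma measurable_beta (T : Set (List Bool)) (hT : IsTree T) (t : List Bool) :
    MeasurableSet (branches T ∩ Cyl t) := by
  rw [← iInter_levU T hT t]
  exact MeasurableSet.iInter fun i => measurable_levU T t i

lemma branches_inter_cyl {T : Set (List Bool)} {t u : List Bool} (h : t <+: u) :
    branches T ∩ Cyl u = (branches T ∩ Cyl t) ∩ Cyl u := by
  rw [Set.inter_assoc]
  congr 1
  rw [Set.inter_eq_self_of_subset_right (Cyl_mono h)]

lemma minBad_node_bound (μ : Measure (ℕ → Bool))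
    (hμ : ∀ s : List Bool, μ (Cyl s) = (1 / 2 : ℝ≥0∞) ^ s.length)
    (T : Set (List Bool)) (hT : IsTree T) (t : List Bool) {a : ℝ}
    (ha : a ∈ Set.Ioo (0 : ℝ) 1) {u : List Bool} (hu : u ∈ MinBad μ T t a) :
    ENNReal.ofReal (1 - a) * μ ((branches T ∩ Cyl t) ∩ Cyl u) ≤
      ENNReal.ofReal a * μ (Cyl u \ (branches T ∩ Cyl t)) := by
  set β := branches T ∩ Cyl t with hβdef
  have hβ : MeasurableSet β := measurable_beta T hT t
  have hm0 : μ (Cyl u) ≠ 0 := by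
    rw [hμ]; exact pow_ne_zero _ (by norm_num)
  have hmtop : μ (Cyl u) ≠ ∞ := by
    rw [hμ]
    exact ENNReal.pow_ne_top (by norm_num)
  have hwt : wt μ T u < ENNReal.ofReal a := hu.2.1
  have hmb : μ (β ∩ Cyl u) < ENNReal.ofReal a * μ (Cyl u) := by
    have h1 : branches T ∩ Cyl u = β ∩ Cyl u := branches_inter_cyl hu.1
    rw [wt, h1, ENNReal.div_lt_iff (Or.inl hm0) (Or.inl hmtop)] at hwt
    exact hwt
  have hsum : μ (β ∩ Cyl u) + μ (Cyl u \ β) = μ (Cyl u) := by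
    rw [Set.inter_comm]
    exact measure_inter_add_diff (Cyl u) hβ
  have hsplit : ENNReal.ofReal a * μ (Cyl u) + ENNReal.ofReal (1 - a) * μ (Cyl u)
      = μ (Cyl u) := by
    rw [← add_mul, ← ENNReal.ofReal_add ha.1.le (by linarith [ha.2])]
    norm_num
  have hmd : ENNReal.ofReal (1 - a) * μ (Cyl u) ≤ μ (Cyl u \ β) := by
    have h2 : ENNReal.ofReal a * μ (Cyl u) + ENNReal.ofReal (1 - a) * μ (Cyl u)
        ≤ ENNReal.ofReal a * μ (Cyl u) + μ (Cyl u \ β) := by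
      calc ENNReal.ofReal a * μ (Cyl u) + ENNReal.ofReal (1 - a) * μ (Cyl u)
          = μ (Cyl u) := hsplit
        _ = μ (β ∩ Cyl u) + μ (Cyl u \ β) := hsum.symm
        _ ≤ ENNReal.ofReal a * μ (Cyl u) + μ (Cyl u \ β) := add_le_add_left hmb.le _
    exact (ENNReal.add_le_add_iff_left (by finiteness)).mp h2
  calc ENNReal.ofReal (1 - a) * μ (β ∩ Cyl u)
      ≤ ENNReal.ofReal (1 - a) * (ENNReal.ofReal a * μ (Cyl u)) := by
        exact mul_le_mul_right hmb.le _
    _ = ENNReal.ofReal a * (ENNReal.ofReal (1 - a) * μ (Cyl u)) := by ring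
    _ ≤ ENNReal.ofReal a * μ (Cyl u \ β) := mul_le_mul_right hmd _

def badU (μ : Measure (ℕ → Bool)) (T : Set (List Bool)) (t : List Bool) (a : ℝ) :
    Set (ℕ → Bool) := ⋃ u ∈ MinBad μ T t a, Cyl u

lemma measurable_badU (μ : Measure (ℕ → Bool)) (T : Set (List Bool)) (t : List Bool) (a : ℝ) :
    MeasurableSet (badU μ T t a) :=
  MeasurableSet.biUnion (Set.to_countable _) fun _ _ => measurable_Cyl

lemma badU_subset (μ : Measure (ℕ → Bool)) (T : Set (List Bool)) (t : List Bool) (a : ℝ) :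
    badU μ T t a ⊆ Cyl t :=
  Set.iUnion₂_subset fun _ hu => Cyl_mono hu.1

lemma badU_bound (μ : Measure (ℕ → Bool))
    (hμ : ∀ s : List Bool, μ (Cyl s) = (1 / 2 : ℝ≥0∞) ^ s.length)
    (T : Set (List Bool)) (hT : IsTree T) (t : List Bool) {a : ℝ}
    (ha : a ∈ Set.Ioo (0 : ℝ) 1) :
    ENNReal.ofReal (1 - a) * μ ((branches T ∩ Cyl t) ∩ badU μ T t a) ≤
      ENNReal.ofReal a * μ (Cyl t \ (branches T ∩ Cyl t)) := by
  set β := branches T ∩ Cyl t with hβdef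
  have hβ : MeasurableSet β := measurable_beta T hT t
  have h1 : β ∩ badU μ T t a = ⋃ u ∈ MinBad μ T t a, β ∩ Cyl u := by
    rw [badU, Set.inter_iUnion₂]
  have h2 : badU μ T t a \ β = ⋃ u ∈ MinBad μ T t a, Cyl u \ β := by
    ext x
    simp only [badU, Set.mem_diff, Set.mem_iUnion]
    tauto
  have hd1 : (MinBad μ T t a).PairwiseDisjoint (fun u => β ∩ Cyl u) :=
    fun u hu u' hu' hne =>
      ((minBad_disjoint hu hu' hne).inter_left' β).inter_right' β
  have hd2 : (MinBad μ T t a).PairwiseDisjoint (fun u => Cyl u \ β) :=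
    fun u hu u' hu' hne =>
      Disjoint.mono Set.diff_subset Set.diff_subset (minBad_disjoint hu hu' hne)
  rw [h1, measure_biUnion (Set.to_countable _) hd1
    (fun u _ => hβ.inter measurable_Cyl)]
  have h3 : ENNReal.ofReal a * μ (badU μ T t a \ β) ≤ ENNReal.ofReal a * μ (Cyl t \ β) :=
    mul_le_mul_right (measure_mono (Set.diff_subset_diff_left (badU_subset μ T t a))) _
  refine le_trans ?_ h3
  rw [h2, measure_biUnion (Set.to_countable _) hd2
    (fun u _ => measurable_Cyl.diff hβ)]
  rw [ENNReal.tsum_mul_left.symm, ENNReal.tsum_mul_left.symm]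
  exact ENNReal.tsum_le_tsum fun u => minBad_node_bound μ hμ T hT t ha u.2

/-- If `a, b ∈ (0,1)` satisfy `1 − b < ((1−a)/a)·b·(b−a)·c` for some `c ∈ (0,1)`
(i.e. `b > f(a)` for a suitable function `f`) and `w_t = b`, then the fraction
`s_{t,a,i}` of `(t,a)`-good nodes on level `|t| + i` of `T_t` satisfies
`liminf_{i→∞} s_{t,a,i} ≥ a`. -/
theorem stmt19 (μ : Measure (ℕ → Bool))
    (hμ : ∀ s : List Bool, μ (Cyl s) = (1 / 2 : ℝ≥0∞) ^ s.length)
    (T : Set (List Bool)) (hT : IsTree T) (t : List Bool)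
    (ε : ℝ) (hε : 0 < ε) (a b : ℝ)
    (ha : a ∈ Set.Ioo (0 : ℝ) 1) (hb : b ∈ Set.Ioo (0 : ℝ) 1)
    (hab : ∃ c ∈ Set.Ioo (0 : ℝ) 1, 1 - b < ((1 - a) / a) * b * (b - a) * c)
    (hwt : wt μ T t = ENNReal.ofReal b) :
    ENNReal.ofReal a ≤
      Filter.liminf (fun i : ℕ =>
        (((lev T t i ∩ {v | goodNode μ T t a v}).ncard : ℝ≥0∞)) /
          ((lev T t i).ncard : ℝ≥0∞)) Filter.atTop := by
  obtain ⟨c, hc, hlt⟩ := hab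
  obtain ⟨ha0, ha1⟩ := ha
  obtain ⟨hb0, hb1⟩ := hb
  obtain ⟨hc0, hc1⟩ := hc
  have h1a : 0 < 1 - a := by linarith
  have h1b : 0 < 1 - b := by linarith
  -- real arithmetic: the margin
  have hba : a < b := by
    by_contra hcon
    push_neg at hcon
    have h1 : ((1 - a) / a) * b * (b - a) * c ≤ 0 := by
      have : b - a ≤ 0 := by linarith
      have hpos : 0 < ((1 - a) / a) * b * c := by positivity
      nlinarith
    linarith
  have hlt' : (1 - b) * a < (1 - a) * b * (b - a) * c := by
    rw [show ((1 - a) / a) * b * (b - a) * c = ((1 - a) * b * (b - a) * c) / a by ring] at hlt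
    exact (lt_div_iff₀ ha0).mp hlt
  set K : ℝ := a * (1 - b) / (1 - a) with hKdef
  have hK0 : 0 < K := by positivity
  have hKb : K < (1 - a) * b := by
    rw [hKdef, div_lt_iff₀ h1a]
    have h2 : (b - a) * c < 1 - a := by nlinarith
    nlinarith [mul_pos (mul_pos h1a hb0) (sub_pos.mpr hba)]
  set r : ℝ := (K + (1 - a) * b) / 2 with hrdef
  have hKr : K < r := by rw [hrdef]; linarith
  have hrb : r < (1 - a) * b := by rw [hrdef]; linarith
  have hr0 : 0 < r := by rw [hrdef]; nlinarith
  set b'' : ℝ := r / (1 - a) with hb''def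
  have hb''0 : 0 < b'' := by positivity
  have hb''b : b'' < b := by rw [hb''def, div_lt_iff₀ h1a]; linarith
  have hreq : (1 - a) * b'' = r := by rw [hb''def]; field_simp
  have hKa : a * (1 - b) = (1 - a) * K := by rw [hKdef]; field_simp
  -- measure setup
  set h0 : ℝ≥0∞ := (1 / 2 : ℝ≥0∞) ^ t.length with hh0def
  have hne0 : h0 ≠ 0 := pow_ne_zero _ (by norm_num)
  have hnetop : h0 ≠ ∞ := ENNReal.pow_ne_top (by norm_num)
  have hCyl_t : μ (Cyl t) = h0 := hμ t
  set β : Set (ℕ → Bool) := branches T ∩ Cyl t with hβdef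
  have hβm : MeasurableSet β := measurable_beta T hT t
  have hβsub : β ⊆ Cyl t := Set.inter_subset_right
  have hβμ : μ β = ENNReal.ofReal b * h0 := by
    have h1 : wt μ T t * μ (Cyl t) = μ β := by
      rw [wt]
      exact ENNReal.div_mul_cancel (hCyl_t ▸ hne0) (hCyl_t ▸ hnetop)
    rw [← h1, hwt, hCyl_t]
  have hdiffμ : μ (Cyl t \ β) = ENNReal.ofReal (1 - b) * h0 := by
    have hsum : μ β + μ (Cyl t \ β) = h0 := by
      rw [← hCyl_t, ← measure_inter_add_diff (Cyl t) hβm,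
        Set.inter_eq_self_of_subset_right hβsub]
    have hsplit : ENNReal.ofReal b * h0 + ENNReal.ofReal (1 - b) * h0 = h0 := by
      rw [← add_mul, ← ENNReal.ofReal_add hb0.le h1b.le]
      norm_num
    rw [hβμ] at hsum
    exact (ENNReal.add_right_inj (by finiteness)).mp (hsum.trans hsplit.symm)
  -- bound on the bad part
  have hQ : μ (badU μ T t a ∩ β) ≤ ENNReal.ofReal K * h0 := by
    have h1 := badU_bound μ hμ T hT t ⟨ha0, ha1⟩
    rw [← hβdef, hdiffμ] at h1
    have h2 : ENNReal.ofReal a * (ENNReal.ofReal (1 - b) * h0)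
        = ENNReal.ofReal (1 - a) * (ENNReal.ofReal K * h0) := by
      rw [← mul_assoc, ← mul_assoc, ← ENNReal.ofReal_mul ha0.le,
        ← ENNReal.ofReal_mul h1a.le, hKa]
    rw [h2] at h1
    rw [Set.inter_comm]
    exact (ENNReal.mul_le_mul_iff_right (ENNReal.ofReal_pos.mpr h1a).ne' (by finiteness)).mp h1
  -- continuity of measure along levels
  have hlevU_sub : ∀ i, levU T t i ⊆ Cyl t :=
    fun i => Set.iUnion₂_subset fun u hu => Cyl_mono hu.2.1
  have hfin_levU : ∀ i, μ (levU T t i) ≠ ∞ := fun i =>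
    (lt_of_le_of_lt (measure_mono (hlevU_sub i)) (by rw [hCyl_t]; exact hnetop.lt_top)).ne
  have htendp : Tendsto (fun i => μ (levU T t i)) atTop (𝓝 (ENNReal.ofReal b * h0)) := by
    have h1 := tendsto_measure_iInter_atTop (μ := μ)
      (fun i => (measurable_levU T t i).nullMeasurableSet) (levU_antitone T hT t)
      ⟨0, hfin_levU 0⟩
    rw [iInter_levU T hT t, ← hβdef, hβμ] at h1
    exact h1
  have htendq : Tendsto (fun i => μ (badU μ T t a ∩ levU T t i)) atTop
      (𝓝 (μ (badU μ T t a ∩ β))) := by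
    have h1 := tendsto_measure_iInter_atTop (μ := μ)
      (s := fun i => badU μ T t a ∩ levU T t i)
      (fun i => ((measurable_badU μ T t a).inter (measurable_levU T t i)).nullMeasurableSet)
      (fun i j hij => Set.inter_subset_inter_right _ (levU_antitone T hT t hij))
      ⟨0, (lt_of_le_of_lt (measure_mono Set.inter_subset_right)
        (hfin_levU 0).lt_top).ne⟩
    rwa [← Set.inter_iInter, iInter_levU T hT t, ← hβdef] at h1
  -- the eventual bounds
  have hrh : μ (badU μ T t a ∩ β) < ENNReal.ofReal r * h0 :=
    lt_of_le_of_lt hQ (by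
      exact (ENNReal.mul_lt_mul_iff_left hne0 hnetop).mpr
        ((ENNReal.ofReal_lt_ofReal_iff hr0).mpr hKr))
  have hb''h : ENNReal.ofReal b'' * h0 < ENNReal.ofReal b * h0 :=
    (ENNReal.mul_lt_mul_iff_left hne0 hnetop).mpr
      ((ENNReal.ofReal_lt_ofReal_iff hb0).mpr hb''b)
  have hev1 : ∀ᶠ i in atTop, μ (badU μ T t a ∩ levU T t i) < ENNReal.ofReal r * h0 :=
    htendq.eventually_lt_const hrh
  have hev2 : ∀ᶠ i in atTop, ENNReal.ofReal b'' * h0 < μ (levU T t i) :=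
    htendp.eventually_const_lt hb''h
  refine Filter.le_liminf_of_le (by isBoundedDefault) ?_
  filter_upwards [hev1, hev2] with i hq hp
  -- counting on level i
  set C : ℕ := (lev T t i).ncard with hCdef
  set G : ℕ := ((lev T t i) ∩ {v | goodNode μ T t a v}).ncard with hGdef
  set B : ℕ := ((lev T t i) \ {v | goodNode μ T t a v}).ncard with hBdef
  have hfin : (lev T t i).Finite :=
    (List.finite_length_eq Bool (t.length + i)).subset fun u hu => lev_length hu
  have hGB : G + B = C :=
    Set.ncard_inter_add_ncard_diff_eq_ncard (lev T t i) {v | goodNode μ T t a v} hfin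
  set w : ℝ≥0∞ := (1 / 2 : ℝ≥0∞) ^ i with hwdef
  have hw0 : h0 * w ≠ 0 := mul_ne_zero hne0 (pow_ne_zero _ (by norm_num))
  have hwtop : h0 * w ≠ ∞ := ENNReal.mul_ne_top hnetop (ENNReal.pow_ne_top (by norm_num))
  have hpow : (1 / 2 : ℝ≥0∞) ^ (t.length + i) = h0 * w := by rw [pow_add]
  have hμlev : μ (levU T t i) = (C : ℝ≥0∞) * (h0 * w) := by
    rw [measure_levU μ hμ T t i, hpow]
  -- bad cylinders are inside badU ∩ levU
  have hBsub : (⋃ v ∈ (lev T t i) \ {v | goodNode μ T t a v}, Cyl v)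
      ⊆ badU μ T t a ∩ levU T t i := by
    apply Set.iUnion₂_subset
    rintro v ⟨hvlev, hvbad⟩
    refine Set.subset_inter ?_ ?_
    · obtain ⟨u, hu, huv⟩ := exists_minBad hvlev.2.1 hvbad
      exact (Cyl_mono huv).trans (Set.subset_iUnion₂_of_subset u hu subset_rfl)
    · exact (Set.subset_iUnion₂_of_subset v hvlev subset_rfl)
  have hBμ : (B : ℝ≥0∞) * (h0 * w) ≤ μ (badU μ T t a ∩ levU T t i) := by
    rw [← hpow, ← measure_cylUnion μ hμ _ _ (fun v hv => lev_length hv.1)]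
    exact measure_mono hBsub
  -- derive B ≤ (1-a) * C
  have hBC : (B : ℝ≥0∞) ≤ ENNReal.ofReal (1 - a) * (C : ℝ≥0∞) := by
    have h1 : (B : ℝ≥0∞) * (h0 * w) ≤ (ENNReal.ofReal (1 - a) * (C : ℝ≥0∞)) * (h0 * w) := by
      calc (B : ℝ≥0∞) * (h0 * w) ≤ μ (badU μ T t a ∩ levU T t i) := hBμ
        _ ≤ ENNReal.ofReal r * h0 := hq.le
        _ = ENNReal.ofReal (1 - a) * (ENNReal.ofReal b'' * h0) := by
            rw [← mul_assoc, ← ENNReal.ofReal_mul h1a.le, hreq]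
        _ ≤ ENNReal.ofReal (1 - a) * μ (levU T t i) := mul_le_mul_right hp.le _
        _ = (ENNReal.ofReal (1 - a) * (C : ℝ≥0∞)) * (h0 * w) := by
            rw [hμlev]; ring
    exact (ENNReal.mul_le_mul_iff_left hw0 hwtop).mp h1
  -- C is nonzero
  have hC0 : (C : ℝ≥0∞) ≠ 0 := by
    intro hC
    rw [hμlev, hC, zero_mul] at hp
    simp at hp
  rw [ENNReal.le_div_iff_mul_le (Or.inl hC0) (Or.inr (by finiteness))]
  have hfinal : ENNReal.ofReal a * (C : ℝ≥0∞) + (B : ℝ≥0∞)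
      ≤ (G : ℝ≥0∞) + (B : ℝ≥0∞) := by
    calc ENNReal.ofReal a * (C : ℝ≥0∞) + (B : ℝ≥0∞)
        ≤ ENNReal.ofReal a * (C : ℝ≥0∞) + ENNReal.ofReal (1 - a) * (C : ℝ≥0∞) :=
          add_le_add_right hBC _
      _ = (ENNReal.ofReal a + ENNReal.ofReal (1 - a)) * (C : ℝ≥0∞) := by rw [add_mul]
      _ = (C : ℝ≥0∞) := by
          rw [← ENNReal.ofReal_add ha0.le h1a.le]
          norm_num
      _ = (G : ℝ≥0∞) + (B : ℝ≥0∞) := by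
          rw [← Nat.cast_add, hGB]
  exact (ENNReal.add_le_add_iff_right (by finiteness)).mp hfinal
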